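/- Let (g, ω) be a symplectic Lie algebra with compatible left-symmetric product ∘, L_x(y) = x∘y, R_x(y) = y∘x, and define the endomorphism ∇_x = (2/3)·L_x - (1/3)·R_x of g for each x ∈ g. Define the curvature R(x,y) = ∇_x ∘ ∇_y - ∇_y ∘ ∇_x - ∇_{[x,y]} ∈ End(g). Then for all x, y ∈ g: R(x,y) = -(1/9)·(R_x ∘ R_y - R_y ∘ R_x) - (2/9)·L_{[x,y]} + (1/9)·R_{[x,y]}. -/
import Mathlib


noncomputable section

variable {g : Type*} [LieRing g] [LieAlgebra ℝ g]

/-- The torsion free symplectic connection `∇_x = (2/3)·L_x - (1/3)·R_x` associated to a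
left-symmetric product `P` (`P x y = x∘y`, so `L_x = P x` and `R_x = P.flip x`). -/
def nabla (P : g →ₗ[ℝ] g →ₗ[ℝ] g) (x : g) : Module.End ℝ g :=
  (2/3 : ℝ) • P x - (1/3 : ℝ) • P.flip x

/-- The curvature `R(x,y) = ∇_x∇_y - ∇_y∇_x - ∇_{[x,y]}` of `∇`. -/
def curv (P : g →ₗ[ℝ] g →ₗ[ℝ] g) (x y : g) : Module.End ℝ g :=
  nabla P x ∘ₗ nabla P y - nabla P y ∘ₗ nabla P x - nabla P ⁅x, y⁆

/-- curvature formula for the natural connection of a symplectic Lie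
algebra. -/
theorem symplectic_lie_algebra_curvature_formula
    [FiniteDimensional ℝ g]
    (ω : g →ₗ[ℝ] g →ₗ[ℝ] ℝ)
    (halt : ∀ x : g, ω x x = 0)
    (hnondeg : ∀ x : g, (∀ y : g, ω x y = 0) → x = 0)
    (hcocycle : ∀ x y z : g, ω ⁅x, y⁆ z + ω ⁅y, z⁆ x + ω ⁅z, x⁆ y = 0)
    (P : g →ₗ[ℝ] g →ₗ[ℝ] g)
    (hdef : ∀ x y z : g, ω (P x y) z = - ω y ⁅x, z⁆)
    (hls : ∀ x y z : g, P (P x y) z - P x (P y z) = P (P y x) z - P y (P x z))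
    (hcomp : ∀ x y : g, P x y - P y x = ⁅x, y⁆) :
    ∀ x y : g,
      curv P x y =
        -(1/9 : ℝ) • (P.flip x ∘ₗ P.flip y - P.flip y ∘ₗ P.flip x)
          - (2/9 : ℝ) • P ⁅x, y⁆ + (1/9 : ℝ) • P.flip ⁅x, y⁆ := by
  intro x y
  apply LinearMap.ext
  intro z
  have A := hls x y z
  have B := hls x z y
  have C := hls y z x
  simp only [curv, nabla, ← hcomp, LinearMap.sub_apply, LinearMap.add_apply,
    LinearMap.smul_apply, LinearMap.comp_apply, LinearMap.flip_apply,
    LinearMap.neg_apply, map_sub, map_smul, LinearMap.sub_apply, LinearMap.smul_apply]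
  linear_combination (norm := module) (-(4/9) : ℝ) • A + ((2/9) : ℝ) • B + (-(2/9) : ℝ) • C
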